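/- For every t ∈ [0,T) and s > 0, the digital call price satisfies ∂D/∂s(t,s) = e^{−(r+λ)(T−t)}·φ(d2(t,s))/(s·σ·√(T−t)), D(t,s) → 0 as s → 0⁺, and s·∂D/∂s(t,s) − D(t,s) = e^{−(r+λ)(T−t)}·(φ(d2(t,s))/(σ√(T−t)) − Φ(d2(t,s))). Consequently, with constant buyer default intensity λ̃, the drift function of the digital call is G(t,s) = (λ̃ − λ)·e^{−(r+λ)(T−t)}·(φ(d2(t,s))/(σ√(T−t)) − Φ(d2(t,s))). -/
import Mathlib


open Real Filter

/-- Standard normal density `φ`. -/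
noncomputable def stdNormalPDF (x : ℝ) : ℝ := Real.exp (-(x ^ 2 / 2)) / Real.sqrt (2 * Real.pi)

/-- Standard normal cumulative distribution function `Φ`. -/
noncomputable def stdNormalCDF (x : ℝ) : ℝ := ∫ u in Set.Iic x, stdNormalPDF u

/-- `d₂(t,s) = (log(s/K) + (r + λ − σ²/2)(T − t)) / (σ√(T − t))`. -/
noncomputable def d2 (r lam sigma K T t s : ℝ) : ℝ :=
  (Real.log (s / K) + (r + lam - sigma ^ 2 / 2) * (T - t)) / (sigma * Real.sqrt (T - t))

/-- Market price of a digital call (payoff `1_{S_T > K}`) on a defaultable stock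
with constant default intensity `λ`: `D(t,s) = e^{−(r+λ)(T−t)}·Φ(d₂(t,s))`. -/
noncomputable def digitalCall (r lam sigma K T t s : ℝ) : ℝ :=
  Real.exp (-((r + lam) * (T - t))) * stdNormalCDF (d2 r lam sigma K T t s)

lemma integrable_stdNormalPDF : MeasureTheory.Integrable stdNormalPDF := by
  have h := (integrable_exp_neg_mul_sq (by norm_num : (0:ℝ) < 1/2)).mul_const
    (Real.sqrt (2 * Real.pi))⁻¹
  refine h.congr (Filter.Eventually.of_forall fun x => ?_)
  simp only [stdNormalPDF, div_eq_mul_inv]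
  ring_nf

lemma stdNormalPDF_nonneg (x : ℝ) : 0 ≤ stdNormalPDF x :=
  div_nonneg (Real.exp_pos _).le (Real.sqrt_nonneg _)

lemma continuous_stdNormalPDF : Continuous stdNormalPDF := by
  unfold stdNormalPDF
  fun_prop

lemma hasDerivAt_stdNormalCDF (x : ℝ) : HasDerivAt stdNormalCDF (stdNormalPDF x) x := by
  have key : stdNormalCDF = fun y =>
      stdNormalCDF x + ∫ u in x..y, stdNormalPDF u := by
    funext y
    rw [eq_comm, stdNormalCDF, stdNormalCDF, add_comm]
    rw [← intervalIntegral.integral_Iic_sub_Iic integrable_stdNormalPDF.integrableOn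
      integrable_stdNormalPDF.integrableOn]
    ring
  rw [key]
  have h := intervalIntegral.integral_hasDerivAt_right
    (f := stdNormalPDF) (a := x) (b := x)
    (integrable_stdNormalPDF.intervalIntegrable)
    (continuous_stdNormalPDF.stronglyMeasurableAtFilter _ _)
    continuous_stdNormalPDF.continuousAt
  exact h.const_add _

lemma stdNormalCDF_nonneg (x : ℝ) : 0 ≤ stdNormalCDF x :=
  MeasureTheory.setIntegral_nonneg measurableSet_Iic fun u _ => stdNormalPDF_nonneg u

lemma stdNormalCDF_mono : Monotone stdNormalCDF := fun a b hab =>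
  MeasureTheory.setIntegral_mono_set integrable_stdNormalPDF.integrableOn
    (Filter.Eventually.of_forall fun u => stdNormalPDF_nonneg u)
    (HasSubset.Subset.eventuallyLE (Set.Iic_subset_Iic.2 hab))

lemma tendsto_stdNormalCDF_atBot : Tendsto stdNormalCDF atBot (nhds 0) := by
  have hseq : Tendsto (fun n : ℕ => stdNormalCDF (-(n : ℝ))) atTop (nhds 0) := by
    have h := MeasureTheory.tendsto_setIntegral_of_antitone
      (s := fun n : ℕ => Set.Iic (-(n : ℝ))) (f := stdNormalPDF)
      (μ := MeasureTheory.volume)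
      (fun n => measurableSet_Iic)
      (fun a b hab => Set.Iic_subset_Iic.2 (by exact neg_le_neg (by exact_mod_cast hab)))
      ⟨0, integrable_stdNormalPDF.integrableOn⟩
    have hempty : (⋂ n : ℕ, Set.Iic (-(n : ℝ))) = ∅ := by
      ext x
      simp only [Set.mem_iInter, Set.mem_Iic, Set.mem_empty_iff_false, iff_false, not_forall]
      obtain ⟨n, hn⟩ := exists_nat_gt (-x)
      exact ⟨n, by linarith⟩
    rw [hempty] at h
    simpa [stdNormalCDF] using h
  rw [Metric.tendsto_nhds] at hseq ⊢
  intro ε hε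
  obtain ⟨N, hN⟩ := (hseq ε hε).exists
  rw [eventually_atBot]
  refine ⟨-(N : ℝ), fun x hx => ?_⟩
  rw [Real.dist_eq, sub_zero, abs_of_nonneg (stdNormalCDF_nonneg _)] at hN ⊢
  exact lt_of_le_of_lt (stdNormalCDF_mono hx) hN

/-- **Drift function of the defaultable digital call.**
For `t ∈ [0,T)` and `s > 0`:
`∂D/∂s(t,s) = e^{−(r+λ)(T−t)}·φ(d₂(t,s))/(s·σ·√(T−t))`, `D(t,s) → 0` as `s → 0⁺`,
and `s·∂D/∂s(t,s) − D(t,s) = e^{−(r+λ)(T−t)}·(φ(d₂(t,s))/(σ√(T−t)) − Φ(d₂(t,s)))`.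
Consequently, with constant buyer default intensity `λ̃`, the drift function of
the digital call is
`G(t,s) = (λ̃ − λ)·e^{−(r+λ)(T−t)}·(φ(d₂(t,s))/(σ√(T−t)) − Φ(d₂(t,s)))`. -/
theorem digitalCall_drift
    (r lam sigma K T lamTilde : ℝ) (hr : 0 ≤ r) (hlam : 0 ≤ lam) (hsigma : 0 < sigma)
    (hK : 0 < K) (hT : 0 < T)
    (t s : ℝ) (ht : t ∈ Set.Ico (0 : ℝ) T) (hs : 0 < s) :
    HasDerivAt (fun x => digitalCall r lam sigma K T t x)
        (Real.exp (-((r + lam) * (T - t))) * stdNormalPDF (d2 r lam sigma K T t s)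
          / (s * sigma * Real.sqrt (T - t))) s
    ∧ Tendsto (fun x => digitalCall r lam sigma K T t x)
        (nhdsWithin 0 (Set.Ioi 0)) (nhds 0)
    ∧ s * (Real.exp (-((r + lam) * (T - t))) * stdNormalPDF (d2 r lam sigma K T t s)
            / (s * sigma * Real.sqrt (T - t)))
          - digitalCall r lam sigma K T t s
        = Real.exp (-((r + lam) * (T - t)))
            * (stdNormalPDF (d2 r lam sigma K T t s) / (sigma * Real.sqrt (T - t))
                - stdNormalCDF (d2 r lam sigma K T t s))
    ∧ (lamTilde - lam)
          * (s * (Real.exp (-((r + lam) * (T - t))) * stdNormalPDF (d2 r lam sigma K T t s)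
                / (s * sigma * Real.sqrt (T - t)))
              + 0 - digitalCall r lam sigma K T t s)
        = (lamTilde - lam) * Real.exp (-((r + lam) * (T - t)))
            * (stdNormalPDF (d2 r lam sigma K T t s) / (sigma * Real.sqrt (T - t))
                - stdNormalCDF (d2 r lam sigma K T t s)) := by
  obtain ⟨ht0, htT⟩ := ht
  have hTt : 0 < T - t := sub_pos.2 htT
  have hsqrt : 0 < Real.sqrt (T - t) := Real.sqrt_pos.2 hTt
  have hm : 0 < sigma * Real.sqrt (T - t) := mul_pos hsigma hsqrt
  set c : ℝ := (r + lam - sigma ^ 2 / 2) * (T - t) with hc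
  set m : ℝ := sigma * Real.sqrt (T - t) with hmdef
  set e : ℝ := Real.exp (-((r + lam) * (T - t))) with he
  -- derivative of d2 in s
  have hlog : HasDerivAt (fun x : ℝ => Real.log (x / K)) (1 / s) s := by
    have h1 : HasDerivAt (fun x : ℝ => Real.log x - Real.log K) (1 / s) s := by
      simpa [one_div] using (Real.hasDerivAt_log hs.ne').sub_const (Real.log K)
    refine h1.congr_of_eventuallyEq ?_
    filter_upwards [Ioi_mem_nhds hs] with x hx
    rw [Real.log_div (ne_of_gt hx) hK.ne']
  have hd2 : HasDerivAt (fun x : ℝ => d2 r lam sigma K T t x) (1 / s / m) s := by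
    unfold d2
    exact (hlog.add_const c).div_const m
  have hD : HasDerivAt (fun x => digitalCall r lam sigma K T t x)
      (e * (stdNormalPDF (d2 r lam sigma K T t s) * (1 / s / m))) s := by
    unfold digitalCall
    exact (((hasDerivAt_stdNormalCDF (d2 r lam sigma K T t s)).comp s hd2)).const_mul e
  have hderiv_eq : e * (stdNormalPDF (d2 r lam sigma K T t s) * (1 / s / m))
      = e * stdNormalPDF (d2 r lam sigma K T t s) / (s * m) := by
    field_simp
  refine ⟨?_, ?_, ?_, ?_⟩
  · have := hD
    rw [hderiv_eq] at this
    simpa [hmdef, mul_assoc] using this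
  · -- limit as s → 0+
    have hd2lim : Tendsto (fun x : ℝ => d2 r lam sigma K T t x)
        (nhdsWithin 0 (Set.Ioi 0)) atBot := by
      unfold d2
      apply Tendsto.atBot_div_const hm
      apply tendsto_atBot_add_const_right
      have hlog2 : Tendsto (fun x : ℝ => Real.log (x / K))
          (nhdsWithin 0 (Set.Ioi 0)) atBot := by
        have : Tendsto (fun x : ℝ => x / K) (nhdsWithin 0 (Set.Ioi 0))
            (nhdsWithin 0 (Set.Ioi 0)) := by
          rw [tendsto_nhdsWithin_iff]
          constructor
          · have h0 : Tendsto (fun x : ℝ => x / K) (nhds 0) (nhds (0 / K)) :=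
              (continuous_id.div_const K).continuousAt
            rw [zero_div] at h0
            exact h0.mono_left nhdsWithin_le_nhds
          · filter_upwards [self_mem_nhdsWithin] with x hx
            exact div_pos hx hK
        exact Real.tendsto_log_nhdsGT_zero.comp this
      exact hlog2
    have := (tendsto_stdNormalCDF_atBot.comp hd2lim).const_mul e
    unfold digitalCall
    simpa using this
  · unfold digitalCall
    rw [hmdef, he]
    have hs' : s ≠ 0 := hs.ne'
    have hsig' : sigma ≠ 0 := hsigma.ne'
    have hsq' : Real.sqrt (T - t) ≠ 0 := hsqrt.ne'
    field_simp
  · unfold digitalCall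
    rw [hmdef, he]
    have hs' : s ≠ 0 := hs.ne'
    have hsig' : sigma ≠ 0 := hsigma.ne'
    have hsq' : Real.sqrt (T - t) ≠ 0 := hsqrt.ne'
    field_simp
    ring
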